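/- arXiv:1709.00976 — 6 statements merged into one kernel-verified Lean document; each statement's English description precedes it below -/
import Mathlib

section
/- Let m ∈ ℕ and s ∈ (0, m) with s not an integer. Then ∫₀^∞ ρ^{s-1} / ∏_{k=1}^{m} (ρ + k²) dρ = 2 Γ(s) Γ(1-s) ∑_{k=1}^{m} (-1)^{k+1} k^{2s} / ((m-k)! (m+k)!). -/
open MeasureTheory Real Set
open scoped Classical BigOperators RealInnerProductSpace

noncomputable section

/-- Finite difference of order `2m`. -/
def deltaOp {E : Type*} [AddCommGroup E] [Module ℝ E] (m : ℕ)
    (u : E → ℝ) (x y : E) : ℝ :=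
  ∑ k ∈ Finset.Icc (-(m : ℤ)) (m : ℤ),
    (-1 : ℝ) ^ k * ((2 * m).choose ((m : ℤ) - k).toNat : ℝ) * u (x + k • y)

/-- The normalizing constant `c_{N,m,s}`. -/
def cnms (N m : ℕ) (s : ℝ) : ℝ :=
  if ∃ n : ℤ, s = (n : ℝ) then
    4 ^ s * Real.Gamma ((N : ℝ) / 2 + s) * Real.Gamma (s + 1) /
        (2 * Real.pi ^ ((N : ℝ) / 2)) *
      (∑ k ∈ Finset.Icc 2 m,
        (-1 : ℝ) ^ ((k : ℤ) - ⌊s⌋ + 1) * ((2 * m).choose (m - k) : ℝ) *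
          (k : ℝ) ^ (2 * s) * Real.log k)⁻¹
  else
    4 ^ s * Real.Gamma ((N : ℝ) / 2 + s) / (Real.pi ^ ((N : ℝ) / 2) * Real.Gamma (-s)) *
      (∑ k ∈ Finset.Icc 1 m,
        (-1 : ℝ) ^ k * ((2 * m).choose (m - k) : ℝ) * (k : ℝ) ^ (2 * s))⁻¹

/-- The hypersingular integral operator `L_{m,s}`. -/
def Lop (N m : ℕ) (s : ℝ) (u : EuclideanSpace ℝ (Fin N) → ℝ)
    (x : EuclideanSpace ℝ (Fin N)) : ℝ :=
  cnms N m s / 2 * ∫ y, deltaOp m u x y / ‖y‖ ^ ((N : ℝ) + 2 * s)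

/-- Membership in the weighted space `𝓛¹_s`. -/
def memL1 (N : ℕ) (s : ℝ) (u : EuclideanSpace ℝ (Fin N) → ℝ) : Prop :=
  MeasureTheory.LocallyIntegrable u ∧
    MeasureTheory.Integrable (fun x => |u x| / (1 + ‖x‖ ^ ((N : ℝ) + 2 * s)))

/-- `u` is `n` times continuously differentiable on `U` with locally `σ`-Hölder
continuous derivatives of order `n`. -/
def holderSpaceOn (N : ℕ) (n : ℕ) (σ : ℝ) (U : Set (EuclideanSpace ℝ (Fin N)))
    (u : EuclideanSpace ℝ (Fin N) → ℝ) : Prop :=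
  ContDiffOn ℝ n u U ∧
    ∀ x ∈ U, ∃ ε > (0 : ℝ), ∃ C : ℝ, 0 ≤ C ∧
      ∀ y ∈ U ∩ Metric.ball x ε, ∀ z ∈ U ∩ Metric.ball x ε,
        ‖iteratedFDerivWithin ℝ n u U y - iteratedFDerivWithin ℝ n u U z‖ ≤
          C * ‖y - z‖ ^ σ

/-- The space `C^t(U)` for `t > 0`, writing `t = n + σ` with `n ∈ ℕ₀`, `σ ∈ (0,1]`. -/
def Cspace (N : ℕ) (t : ℝ) (U : Set (EuclideanSpace ℝ (Fin N)))
    (u : EuclideanSpace ℝ (Fin N) → ℝ) : Prop :=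
  holderSpaceOn N (⌈t⌉ - 1).toNat (t - ((⌈t⌉ : ℝ) - 1)) U u

/-- The norm `‖u‖_{C^t(V)}`. -/
def CNorm (N : ℕ) (t : ℝ) (V : Set (EuclideanSpace ℝ (Fin N)))
    (u : EuclideanSpace ℝ (Fin N) → ℝ) : ℝ :=
  (∑ i ∈ Finset.range ((⌈t⌉ - 1).toNat + 1),
      ⨆ x : V, ‖iteratedFDerivWithin ℝ i u V x‖) +
    ⨆ p : V × V,
      ‖iteratedFDerivWithin ℝ (⌈t⌉ - 1).toNat u V p.1 -
          iteratedFDerivWithin ℝ (⌈t⌉ - 1).toNat u V p.2‖ /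
        ‖(p.1 : EuclideanSpace ℝ (Fin N)) - (p.2 : EuclideanSpace ℝ (Fin N))‖ ^
          (t - ((⌈t⌉ : ℝ) - 1))

/-- Fourier transform with the convention `(2π)^{-N/2} ∫ u(x) e^{-i x·ξ} dx`. -/
def FT (N : ℕ) (u : EuclideanSpace ℝ (Fin N) → ℝ)
    (ξ : EuclideanSpace ℝ (Fin N)) : ℂ :=
  (((2 * Real.pi) ^ (-(N : ℝ) / 2) : ℝ) : ℂ) *
    ∫ x : EuclideanSpace ℝ (Fin N),
      Complex.exp (-Complex.I * ((⟪x, ξ⟫ : ℝ) : ℂ)) * (u x : ℂ)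

/-- First-order partial derivative in direction `i`. -/
def pderiv' (N : ℕ) (i : Fin N) (u : EuclideanSpace ℝ (Fin N) → ℝ) :
    EuclideanSpace ℝ (Fin N) → ℝ :=
  fun x => fderiv ℝ u x (EuclideanSpace.single i 1)

/-- Multi-index partial derivative `∂^α`. -/
def mderiv (N : ℕ) (α : Fin N → ℕ) (u : EuclideanSpace ℝ (Fin N) → ℝ) :
    EuclideanSpace ℝ (Fin N) → ℝ :=
  (List.finRange N).foldr (fun i f => (pderiv' N i)^[α i] f) u

/-- The negative Laplacian `-Δ`. -/
def negLap (N : ℕ) (u : EuclideanSpace ℝ (Fin N) → ℝ) :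
    EuclideanSpace ℝ (Fin N) → ℝ :=
  fun x => -∑ i, pderiv' N i (pderiv' N i u) x

/-- The fractional Laplacian `(-Δ)^σ`, `σ ∈ (0,1)`. -/
def fracLap (N : ℕ) (σ : ℝ) (v : EuclideanSpace ℝ (Fin N) → ℝ)
    (x : EuclideanSpace ℝ (Fin N)) : ℝ :=
  cnms N 1 σ * ∫ y, (v x - v (x + y)) / ‖y‖ ^ ((N : ℝ) + 2 * σ)

/-! Write `s = n + σ` with `n = ⌊s⌋ < m` and `σ ∈ (0, 1)`. Lagrange interpolation of `ρ ^ n` at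
the nodes `-k²` splits `ρ ^ n / ∏ (ρ + k²)` into simple fractions `w_k (-k²) ^ n / (ρ + k²)` with
explicit factorial weights `w_k`. The substitution `x = ρ / (ρ + a)` turns
`∫₀^∞ ρ ^ (σ - 1) / (ρ + a) dρ` into a Beta integral, equal to `a ^ (σ - 1) Γ(σ) Γ(1 - σ)`.
The reflection formula gives `Γ(σ) Γ(1 - σ) = (-1) ^ n Γ(s) Γ(1 - s)`, and this sign cancels the
one in `(-k²) ^ n`. -/

lemma ofReal_rpow_mul_one_sub_rpow {x : ℝ} (hx : x ∈ Ioo (0 : ℝ) 1) (u v : ℝ) :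
    (x : ℂ) ^ ((u : ℂ) - 1) * (1 - (x : ℂ)) ^ ((v : ℂ) - 1) =
      ((x ^ (u - 1) * (1 - x) ^ (v - 1) : ℝ) : ℂ) := by
  have h1x : (0 : ℝ) ≤ 1 - x := by linarith [hx.2]
  rw [Complex.ofReal_mul, Complex.ofReal_cpow hx.1.le, Complex.ofReal_cpow h1x]
  push_cast
  rfl

lemma integrableOn_rpow_mul_one_sub_rpow {u v : ℝ} (hu : 0 < u) (hv : 0 < v) :
    IntegrableOn (fun x : ℝ ↦ x ^ (u - 1) * (1 - x) ^ (v - 1)) (Ioo 0 1) := by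
  have hc := Complex.betaIntegral_convergent (u := u) (v := v) (by simpa using hu)
    (by simpa using hv)
  rw [intervalIntegrable_iff_integrableOn_Ioo_of_le zero_le_one] at hc
  refine IntegrableOn.congr_fun hc.re (fun x hx ↦ ?_) measurableSet_Ioo
  rw [ofReal_rpow_mul_one_sub_rpow hx, RCLike.re_to_complex, Complex.ofReal_re]

lemma integral_rpow_mul_one_sub_rpow {u v : ℝ} (hu : 0 < u) (hv : 0 < v) :
    ∫ x in Ioo (0 : ℝ) 1, x ^ (u - 1) * (1 - x) ^ (v - 1) = Gamma u * Gamma v / Gamma (u + v) := by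
  have hB := Complex.betaIntegral_eq_Gamma_mul_div u v (by simpa using hu) (by simpa using hv)
  rw [Complex.betaIntegral, intervalIntegral.integral_of_le zero_le_one,
    integral_Ioc_eq_integral_Ioo, setIntegral_congr_fun measurableSet_Ioo
      (fun x hx ↦ ofReal_rpow_mul_one_sub_rpow hx u v), integral_complex_ofReal,
    ← Complex.ofReal_add, Complex.Gamma_ofReal, Complex.Gamma_ofReal, Complex.Gamma_ofReal] at hB
  exact_mod_cast hB

section BetaSecondKind

variable {a : ℝ}

lemma hasDerivWithinAt_div_add_const (ha : 0 < a) :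
    ∀ t ∈ Ioi 0, HasDerivWithinAt (fun t ↦ t / (t + a)) (a / (t + a) ^ 2) (Ioi 0) t := by
  intro t ht
  have h := (hasDerivAt_id' t).div ((hasDerivAt_id' t).add_const a)
    (add_pos (mem_Ioi.mp ht) ha).ne'
  rw [one_mul, mul_one, add_sub_cancel_left] at h
  exact h.hasDerivWithinAt

lemma injOn_div_add_const (ha : 0 < a) : InjOn (fun t ↦ t / (t + a)) (Ioi 0) := by
  intro t ht r hr h
  have ht' : t + a ≠ 0 := by simp only [mem_Ioi] at ht; positivity
  have hr' : r + a ≠ 0 := by simp only [mem_Ioi] at hr; positivity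
  rw [div_eq_div_iff ht' hr'] at h
  exact mul_right_cancel₀ ha.ne' (by linarith)

lemma image_div_add_const_Ioi (ha : 0 < a) : (fun t ↦ t / (t + a)) '' Ioi 0 = Ioo 0 1 := by
  ext x
  simp only [mem_image, mem_Ioi, mem_Ioo]
  constructor
  · rintro ⟨t, ht, rfl⟩
    exact ⟨by positivity, (div_lt_one (by positivity)).2 (by linarith)⟩
  · rintro ⟨hx0, hx1⟩
    have h1x : 1 - x ≠ 0 := by linarith
    refine ⟨a * x / (1 - x), div_pos (mul_pos ha hx0) (by linarith), ?_⟩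
    field_simp
    ring

lemma abs_deriv_smul_rpow_mul_one_sub_rpow (ha : 0 < a) {t : ℝ} (ht : 0 < t) (u v : ℝ) :
    |a / (t + a) ^ 2| • ((t / (t + a)) ^ (u - 1) * (1 - t / (t + a)) ^ (v - 1)) =
      a ^ v * (t ^ (u - 1) / (t + a) ^ (u + v)) := by
  have hta : 0 < t + a := by positivity
  have h1 : 1 - t / (t + a) = a / (t + a) := by field_simp; ring
  have hpow : (t + a) ^ (u + v) = (t + a) ^ (u - 1) * (t + a) ^ (v - 1) * (t + a) ^ 2 := by
    rw [← rpow_add hta, ← rpow_natCast, ← rpow_add hta]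
    congr 1
    push_cast
    ring
  have ha' : a ^ v = a ^ (v - 1) * a := by
    rw [← rpow_add_one ha.ne']
    norm_num
  rw [h1, smul_eq_mul, abs_of_pos (by positivity), div_rpow ht.le hta.le, div_rpow ha.le hta.le,
    hpow, ha']
  field_simp

lemma integrableOn_rpow_div_add_rpow (ha : 0 < a) {u v : ℝ} (hu : 0 < u) (hv : 0 < v) :
    IntegrableOn (fun t : ℝ ↦ t ^ (u - 1) / (t + a) ^ (u + v)) (Ioi 0) := by
  have h := integrableOn_rpow_mul_one_sub_rpow hu hv
  rw [← image_div_add_const_Ioi ha, integrableOn_image_iff_integrableOn_abs_deriv_smul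
    measurableSet_Ioi (hasDerivWithinAt_div_add_const ha) (injOn_div_add_const ha)] at h
  exact (integrable_const_mul_iff (rpow_pos_of_pos ha v).ne'.isUnit _).1
    (h.congr_fun (fun t ht ↦ abs_deriv_smul_rpow_mul_one_sub_rpow ha ht u v) measurableSet_Ioi)

lemma integral_rpow_div_add_rpow (ha : 0 < a) {u v : ℝ} (hu : 0 < u) (hv : 0 < v) :
    ∫ t in Ioi (0 : ℝ), t ^ (u - 1) / (t + a) ^ (u + v) =
      a ^ (-v) * (Gamma u * Gamma v / Gamma (u + v)) := by
  have h := integral_image_eq_integral_abs_deriv_smul measurableSet_Ioi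
    (hasDerivWithinAt_div_add_const ha) (injOn_div_add_const ha)
    (fun x ↦ x ^ (u - 1) * (1 - x) ^ (v - 1))
  rw [image_div_add_const_Ioi ha, integral_rpow_mul_one_sub_rpow hu hv,
    setIntegral_congr_fun measurableSet_Ioi
      (fun t ht ↦ abs_deriv_smul_rpow_mul_one_sub_rpow ha ht u v), integral_const_mul] at h
  rw [h, ← mul_assoc, ← rpow_add ha, neg_add_cancel, rpow_zero, one_mul]

variable {σ : ℝ}

lemma integrableOn_rpow_div_add (ha : 0 < a) (h0 : 0 < σ) (h1 : σ < 1) :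
    IntegrableOn (fun t : ℝ ↦ t ^ (σ - 1) / (t + a)) (Ioi 0) := by
  simpa only [add_sub_cancel, rpow_one] using
    integrableOn_rpow_div_add_rpow ha h0 (sub_pos.2 h1)

lemma integral_rpow_div_add (ha : 0 < a) (h0 : 0 < σ) (h1 : σ < 1) :
    ∫ t in Ioi (0 : ℝ), t ^ (σ - 1) / (t + a) = a ^ (σ - 1) * (Gamma σ * Gamma (1 - σ)) := by
  simpa only [add_sub_cancel, rpow_one, Gamma_one, div_one, neg_sub] using
    integral_rpow_div_add_rpow ha h0 (sub_pos.2 h1)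

end BetaSecondKind

section PartialFractions

open Polynomial Lagrange Finset

variable {F ι : Type*} [Field F] [DecidableEq ι] {s : Finset ι} {v : ι → F}

lemma Lagrange.eval_div_prod_sub_eq_sum (hvs : Set.InjOn v s) {f : F[X]} (hf : f.degree < #s)
    {x : F} (hx : ∀ i ∈ s, x ≠ v i) :
    f.eval x / ∏ i ∈ s, (x - v i) = ∑ i ∈ s, nodalWeight s v i * f.eval (v i) / (x - v i) := by
  nth_rewrite 1 [eq_interpolate hvs hf]
  rw [eval_interpolate_not_at_node _ hx, ← eval_nodal,
    mul_div_cancel_left₀ _ (eval_nodal_not_at_node hx)]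
  refine sum_congr rfl fun i _ ↦ ?_
  rw [mul_right_comm, div_eq_mul_inv]

end PartialFractions

section Mellin

open Lagrange Finset

variable {ι : Type*} [DecidableEq ι] {s : Finset ι} {a : ι → ℝ} {n : ℕ} {σ : ℝ}

lemma rpow_add_natCast_sub_one_div_prod_add (ha : ∀ i ∈ s, 0 < a i) (hinj : Set.InjOn a s)
    (hn : n < #s) {ρ : ℝ} (hρ : 0 < ρ) :
    ρ ^ (σ + n - 1) / ∏ i ∈ s, (ρ + a i) =
      ∑ i ∈ s, nodalWeight s (fun i ↦ -a i) i * (-a i) ^ n * (ρ ^ (σ - 1) / (ρ + a i)) := by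
  have hpf := eval_div_prod_sub_eq_sum (v := fun i ↦ -a i) (neg_injective.comp_injOn hinj)
    (f := Polynomial.X ^ n) (by rw [Polynomial.degree_X_pow]; exact_mod_cast hn) (x := ρ)
    (fun i hi ↦ by have := ha i hi; linarith)
  simp only [Polynomial.eval_pow, Polynomial.eval_X, sub_neg_eq_add] at hpf
  rw [show σ + n - 1 = (σ - 1) + n by ring, rpow_add hρ, rpow_natCast, mul_div_assoc, hpf,
    mul_sum]
  refine sum_congr rfl fun i _ ↦ ?_
  ring

lemma integral_rpow_add_natCast_sub_one_div_prod_add (ha : ∀ i ∈ s, 0 < a i)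
    (hinj : Set.InjOn a s) (hn : n < #s) (h0 : 0 < σ) (h1 : σ < 1) :
    ∫ ρ in Ioi (0 : ℝ), ρ ^ (σ + n - 1) / ∏ i ∈ s, (ρ + a i) =
      Gamma σ * Gamma (1 - σ) *
        ∑ i ∈ s, nodalWeight s (fun i ↦ -a i) i * (-a i) ^ n * a i ^ (σ - 1) := by
  rw [setIntegral_congr_fun measurableSet_Ioi
      (fun ρ hρ ↦ rpow_add_natCast_sub_one_div_prod_add ha hinj hn hρ),
    integral_finsetSum _ fun i hi ↦ (integrableOn_rpow_div_add (ha i hi) h0 h1).const_mul _,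
    mul_sum]
  refine sum_congr rfl fun i hi ↦ ?_
  rw [integral_const_mul, integral_rpow_div_add (ha i hi) h0 h1]
  ring

end Mellin

section NodalWeight

open Finset Lagrange
open scoped Nat

lemma prod_range_natCast_sub (l : ℕ) : ∏ i ∈ range l, ((i : ℝ) - l) = (-1) ^ l * l ! := by
  induction l with
  | zero => simp
  | succ l ih =>
    rw [prod_range_succ', Nat.factorial_succ]
    push_cast
    simp only [add_sub_add_right_eq_sub, ih]
    ring

lemma prod_Icc_natCast_add_mul_factorial (k m : ℕ) :
    (∏ j ∈ Finset.Icc 1 m, ((j : ℝ) + k)) * k ! = (m + k)! := by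
  induction m with
  | zero => simp
  | succ m ih =>
    rw [prod_Icc_succ_top (by omega), mul_right_comm, ih, add_right_comm, Nat.factorial_succ]
    push_cast
    ring

lemma prod_Icc_erase_natCast_sub {k m : ℕ} (hk : 1 ≤ k) (hkm : k ≤ m) :
    ∏ j ∈ (Finset.Icc 1 m).erase k, ((j : ℝ) - k) = (-1) ^ (k - 1) * (k - 1)! * (m - k)! := by
  induction m, hkm using Nat.le_induction with
  | base =>
    obtain ⟨l, rfl⟩ := Nat.exists_eq_add_of_le' hk
    rw [Icc_erase_right, prod_Ico_eq_prod_range, add_tsub_cancel_right, Nat.sub_self]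
    push_cast
    simp only [add_sub_add_right_eq_sub, add_comm (1 : ℝ), prod_range_natCast_sub]
    simp
  | succ m hkm ih =>
    rw [← Finset.insert_Icc_right_eq_Icc_add_one (by omega), erase_insert_of_ne (by omega),
      prod_insert (by simp), ih, Nat.succ_sub hkm, Nat.factorial_succ]
    push_cast [Nat.cast_sub hkm]
    ring

lemma nodalWeight_Icc_neg_sq {k m : ℕ} (hk : k ∈ Finset.Icc 1 m) :
    nodalWeight (Finset.Icc 1 m) (fun j : ℕ ↦ -(j : ℝ) ^ 2) k =
      (-1) ^ (k + 1) * (2 * k ^ 2) / ((m - k)! * (m + k)!) := by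
  obtain ⟨hk1, hkm⟩ := Finset.mem_Icc.mp hk
  have hadd : (∏ j ∈ (Finset.Icc 1 m).erase k, ((j : ℝ) + k)) * (2 * k * k !) = (m + k)! := by
    rw [← prod_Icc_natCast_add_mul_factorial k m, ← mul_prod_erase _ _ hk]
    ring
  have hfact : (k ! : ℝ) = k * (k - 1)! := by
    rw [← Nat.mul_factorial_pred (by omega : k ≠ 0)]
    push_cast
    ring
  have hsq : ∏ j ∈ (Finset.Icc 1 m).erase k, (-(k : ℝ) ^ 2 - -(j : ℝ) ^ 2) =
      (∏ j ∈ (Finset.Icc 1 m).erase k, ((j : ℝ) - k)) *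
        ∏ j ∈ (Finset.Icc 1 m).erase k, ((j : ℝ) + k) := by
    rw [← prod_mul_distrib]
    exact prod_congr rfl fun j _ ↦ by ring
  have hsign : (-1 : ℝ) ^ (k + 1) = ((-1) ^ (k - 1))⁻¹ := by
    rw [← inv_pow, inv_neg_one, show k + 1 = k - 1 + 2 by omega, pow_add]
    norm_num
  rw [nodalWeight, prod_inv_distrib, hsq, prod_Icc_erase_natCast_sub hk1 hkm, ← hadd, hfact,
    hsign]
  field_simp

lemma neg_one_pow_mul_nodalWeight_Icc_neg_sq_mul_rpow {k m : ℕ} (hk : k ∈ Finset.Icc 1 m)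
    (n : ℕ) (s : ℝ) :
    (-1) ^ n * (nodalWeight (Finset.Icc 1 m) (fun j : ℕ ↦ -(j : ℝ) ^ 2) k * (-(k : ℝ) ^ 2) ^ n *
      ((k : ℝ) ^ 2) ^ (s - n - 1)) =
      2 * ((-1) ^ (k + 1) * k ^ (2 * s) / ((m - k)! * (m + k)!)) := by
  have hk2 : (0 : ℝ) < k ^ 2 := by
    have := (Finset.mem_Icc.mp hk).1
    positivity
  have hsign : ((-1 : ℝ) ^ n) ^ 2 = 1 := by
    rw [← pow_mul, mul_comm, pow_mul, neg_one_sq, one_pow]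
  have hpow : ((k : ℝ) ^ 2) ^ (n + 1) * ((k : ℝ) ^ 2) ^ (s - n - 1) = (k : ℝ) ^ (2 * s) := by
    rw [← rpow_natCast, ← rpow_add hk2, rpow_mul (Nat.cast_nonneg k), rpow_two]
    push_cast
    ring_nf
  rw [nodalWeight_Icc_neg_sq hk, neg_pow]
  linear_combination (2 * (-1) ^ (k + 1) / ((m - k)! * (m + k)! : ℝ)) *
    (((k : ℝ) ^ 2) ^ (n + 1) * ((k : ℝ) ^ 2) ^ (s - n - 1) * hsign + hpow)

end NodalWeight

lemma Gamma_mul_Gamma_one_sub_sub_natCast (s : ℝ) (n : ℕ) :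
    Gamma (s - n) * Gamma (1 - (s - n)) = (-1) ^ n * (Gamma s * Gamma (1 - s)) := by
  rw [Gamma_mul_Gamma_one_sub, Gamma_mul_Gamma_one_sub, mul_sub, mul_comm π n,
    sin_sub_nat_mul_pi, div_mul_eq_div_div, div_eq_mul_inv, div_eq_mul_inv, ← inv_pow,
    inv_neg_one]
  ring

/-- Value of `∫₀^∞ ρ^{s-1} / ∏_{k=1}^m (ρ + k²) dρ` for non-integer `s ∈ (0,m)`. -/
theorem stmt2 (m : ℕ) (s : ℝ) (hs : s ∈ Set.Ioo (0 : ℝ) m) (hsi : ∀ n : ℤ, s ≠ (n : ℝ)) :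
    ∫ ρ in Set.Ioi (0 : ℝ), ρ ^ (s - 1) / ∏ k ∈ Finset.Icc 1 m, (ρ + (k : ℝ) ^ 2) =
      2 * Real.Gamma s * Real.Gamma (1 - s) *
        ∑ k ∈ Finset.Icc 1 m,
          (-1 : ℝ) ^ (k + 1) * (k : ℝ) ^ (2 * s) /
            ((Nat.factorial (m - k) : ℝ) * (Nat.factorial (m + k) : ℝ)) := by
  obtain ⟨hs0, hsm⟩ := hs
  set n := ⌊s⌋₊
  have hσ0 : 0 < s - n :=
    sub_pos.2 <| (Nat.floor_le hs0.le).lt_of_ne (by exact_mod_cast (hsi n).symm)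
  have hσ1 : s - n < 1 := by linarith [Nat.lt_floor_add_one s]
  have hnm : n < (Finset.Icc 1 m).card := by simpa using (Nat.floor_lt hs0.le).2 hsm
  have hpos : ∀ k ∈ Finset.Icc 1 m, 0 < (k : ℝ) ^ 2 := fun k hk ↦ by
    have := (Finset.mem_Icc.mp hk).1
    positivity
  have hinj : Set.InjOn (fun k : ℕ ↦ (k : ℝ) ^ 2) (Finset.Icc 1 m) := fun i _ j _ h ↦
    Nat.pow_left_injective two_ne_zero (by dsimp only at h; exact_mod_cast h)
  have h := integral_rpow_add_natCast_sub_one_div_prod_add hpos hinj hnm hσ0 hσ1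
  rw [sub_add_cancel, Gamma_mul_Gamma_one_sub_sub_natCast] at h
  rw [h, Finset.mul_sum, Finset.mul_sum]
  refine Finset.sum_congr rfl fun k hk ↦ ?_
  linear_combination
    Gamma s * Gamma (1 - s) * neg_one_pow_mul_nodalWeight_Icc_neg_sq_mul_rpow hk n s
end
end

section
/- Let m ∈ ℕ and n ∈ {1, …, m-1}. Then ∫₀^∞ ρ^{n-1} / ∏_{k=1}^{m} (ρ + k²) dρ = 4 ∑_{k=1}^{m} (-1)^{k-n+1} k^{2n} ln(k) / ((m+k)! (m-k)!). -/
open MeasureTheory Real Set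
open scoped Classical BigOperators RealInnerProductSpace

noncomputable section

/-!
For `n - 1 < m - 1` the integrand splits into partial fractions
`ρ^(n-1) / ∏ (ρ + k²) = ∑ c_k / (ρ + k²)`, `c_k = (-k²)^(n-1) / ∏_{j ≠ k} (j² - k²)`,
and `∑ c_k = 0`, this sum being the coefficient of `X^(m-1)` in the Lagrange interpolant of
`X^(n-1)` at the nodes `-k²`. Hence `∑ c_k log (ρ + k²)` is an antiderivative of the
nonnegative integrand that tends to `0` at infinity, so the integral is `-∑ c_k log k²`.
Finally `∏_{j ≠ k} (j - k) (j + k)` is a product of factorials, which gives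
`c_k = 2 (-1)^(n+k) k^(2n) / ((m+k)! (m-k)!)`.
-/
open Finset Polynomial Filter Topology
open scoped Nat

namespace Lagrange

variable {F ι : Type*} [Field F] [DecidableEq ι] {s : Finset ι} {v : ι → F}

theorem eval_div_prod_sub_eq_sum_s3 (hvs : Set.InjOn v s) {P : F[X]} (hP : P.degree < #s) {x : F}
    (hx : ∀ i ∈ s, x ≠ v i) :
    P.eval x / ∏ i ∈ s, (x - v i) =
      ∑ i ∈ s, P.eval (v i) / (∏ j ∈ s.erase i, (v i - v j)) / (x - v i) := by
  have hnodal : ∏ i ∈ s, (x - v i) ≠ 0 :=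
    prod_ne_zero_iff.2 fun i hi => sub_ne_zero.2 (hx i hi)
  nth_rw 1 [eq_interpolate hvs hP]
  rw [eval_interpolate_not_at_node _ hx, eval_nodal, mul_div_cancel_left₀ _ hnodal]
  refine sum_congr rfl fun i _ => ?_
  rw [nodalWeight, prod_inv_distrib]
  ring

theorem sum_eval_div_prod_sub_eq_zero (hvs : Set.InjOn v s) {P : F[X]}
    (hP : P.natDegree + 1 < #s) :
    ∑ i ∈ s, P.eval (v i) / ∏ j ∈ s.erase i, (v i - v j) = 0 := by
  rw [← coeff_eq_sum hvs ((degree_le_natDegree).trans_lt (by exact_mod_cast (by omega)))]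
  exact coeff_eq_zero_of_natDegree_lt (by omega)

end Lagrange

section LogAntiderivative

variable {ι : Type*} {s : Finset ι} {c b : ι → ℝ}

theorem tendsto_sum_mul_log_add_atTop (hb : ∀ i ∈ s, 0 < b i) (hc : ∑ i ∈ s, c i = 0) :
    Tendsto (fun x => ∑ i ∈ s, c i * log (x + b i)) atTop (𝓝 0) := by
  have hlim : Tendsto (fun x => ∑ i ∈ s, c i * log (1 + b i / x)) atTop (𝓝 0) := by
    have hbase : ∀ i, Tendsto (fun x : ℝ => 1 + b i / x) atTop (𝓝 1) := fun i => by
      simpa using tendsto_const_nhds.add (tendsto_const_nhds.div_atTop (tendsto_id (α := ℝ)))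
    have := tendsto_finsetSum s fun i _ =>
      ((continuousAt_log one_ne_zero).tendsto.comp (hbase i)).const_mul (c i)
    simpa [Function.comp_def] using this
  refine hlim.congr' ?_
  filter_upwards [eventually_gt_atTop 0] with x hx
  have hlog : ∀ i ∈ s, c i * log (x + b i) = c i * log x + c i * log (1 + b i / x) := by
    intro i hi
    have : 0 < b i := hb i hi
    rw [← mul_add, ← log_mul hx.ne' (by positivity)]
    field_simp
  rw [sum_congr rfl hlog, sum_add_distrib, ← sum_mul, hc, zero_mul, zero_add]

theorem integral_Ioi_sum_div_add (hb : ∀ i ∈ s, 0 < b i) (hc : ∑ i ∈ s, c i = 0)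
    (hf : ∀ x > 0, 0 ≤ ∑ i ∈ s, c i / (x + b i)) :
    ∫ x in Set.Ioi 0, ∑ i ∈ s, c i / (x + b i) = -∑ i ∈ s, c i * log (b i) := by
  have hderiv : ∀ x ∈ Set.Ici (0 : ℝ), HasDerivAt (fun x => ∑ i ∈ s, c i * log (x + b i))
      (∑ i ∈ s, c i / (x + b i)) x := by
    intro x hx
    refine HasDerivAt.fun_sum fun i hi => ?_
    have hpos : 0 < x + b i := add_pos_of_nonneg_of_pos hx (hb i hi)
    simpa [div_eq_mul_inv] using
      (((hasDerivAt_id x).add_const (b i)).log hpos.ne').const_mul (c i)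
  simpa using
    integral_Ioi_of_hasDerivAt_of_nonneg' hderiv hf (tendsto_sum_mul_log_add_atTop hb hc)

end LogAntiderivative

section FactorialProducts

variable {R : Type*} [CommRing R]

theorem prod_Ico_one_natCast_sub {i : ℕ} (hi : 1 ≤ i) :
    ∏ j ∈ Ico 1 i, ((j : R) - i) = (-1) ^ (i - 1) * (i - 1)! := by
  have hreflect : ∏ j ∈ Ico 1 i, ((j : R) - i) = ∏ j ∈ Ico 1 i, -((i - j : ℕ) : R) :=
    prod_congr rfl fun j hj => by
      rw [Nat.cast_sub (mem_Ico.1 hj).2.le]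
      ring
  rw [hreflect, prod_Ico_reflect (fun j => -(j : R)) 1 (Nat.le_succ i), Nat.add_sub_cancel,
    Nat.add_sub_cancel_left, prod_neg, Nat.card_Ico, ← Nat.cast_prod,
    ← Nat.sub_add_cancel hi, prod_Ico_id_eq_factorial, Nat.add_sub_cancel]

theorem prod_Ioc_natCast_sub {i m : ℕ} (him : i ≤ m) :
    ∏ j ∈ Ioc i m, ((j : R) - i) = (m - i)! := by
  induction m, him using Nat.le_induction with
  | base => simp
  | succ m him ih =>
    rw [prod_Ioc_succ_top him, ih, Nat.sub_add_comm him, Nat.factorial_succ]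
    push_cast [Nat.cast_sub him]
    ring

theorem factorial_mul_prod_Icc_one_natCast_add (i m : ℕ) :
    (i ! : R) * ∏ j ∈ Icc 1 m, ((j : R) + i) = (m + i)! := by
  induction m with
  | zero => simp
  | succ m ih =>
    rw [prod_Icc_succ_top (Nat.le_add_left 1 m), ← mul_assoc, ih,
      Nat.add_right_comm, Nat.factorial_succ]
    push_cast
    ring

theorem two_mul_sq_mul_prod_erase_sq_sub_sq {i m : ℕ} (hi : 1 ≤ i) (him : i ≤ m) :
    2 * (i : R) ^ 2 * ∏ j ∈ (Finset.Icc 1 m).erase i, ((j : R) ^ 2 - i ^ 2) =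
      (-1) ^ (i - 1) * (m - i)! * (m + i)! := by
  have hsplit : (Finset.Icc 1 m).erase i = Finset.Ico 1 i ∪ Finset.Ioc i m := by
    ext j
    simp only [mem_erase, Finset.mem_Icc, Finset.mem_union, Finset.mem_Ico, Finset.mem_Ioc]
    omega
  have hdisj : Disjoint (Finset.Ico 1 i) (Finset.Ioc i m) :=
    disjoint_left.2 fun j hj hj' => by
      simp only [Finset.mem_Ico, Finset.mem_Ioc] at hj hj'
      omega
  have hsub : ∏ j ∈ (Finset.Icc 1 m).erase i, ((j : R) - i) =
      (-1) ^ (i - 1) * (i - 1)! * (m - i)! := by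
    rw [hsplit, prod_union hdisj, prod_Ico_one_natCast_sub hi, prod_Ioc_natCast_sub him]
  have hadd : 2 * (i : R) * ∏ j ∈ (Finset.Icc 1 m).erase i, ((j : R) + i) =
      ∏ j ∈ Finset.Icc 1 m, ((j : R) + i) := by
    rw [← mul_prod_erase _ _ (Finset.mem_Icc.2 ⟨hi, him⟩)]
    ring
  have hfac : (i : R) * (i - 1)! = i ! := by
    rw [← Nat.cast_mul, Nat.mul_factorial_pred (by omega)]
  have hfactor : ∏ j ∈ (Finset.Icc 1 m).erase i, ((j : R) ^ 2 - i ^ 2) =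
      (∏ j ∈ (Finset.Icc 1 m).erase i, ((j : R) - i)) *
        ∏ j ∈ (Finset.Icc 1 m).erase i, ((j : R) + i) := by
    rw [← prod_mul_distrib]
    exact prod_congr rfl fun _ _ => by ring
  rw [hfactor, hsub, ← factorial_mul_prod_Icc_one_natCast_add, ← hadd, ← hfac]
  ring

end FactorialProducts

theorem integral_Ioi_eval_div_prod_sub {ι : Type*} [DecidableEq ι] {s : Finset ι}
    {v : ι → ℝ} (hvs : Set.InjOn v s) (hv : ∀ i ∈ s, v i < 0) {P : ℝ[X]}
    (hP : P.natDegree + 1 < #s) (hP_nonneg : ∀ x > 0, 0 ≤ P.eval x) :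
    ∫ x in Set.Ioi 0, P.eval x / ∏ i ∈ s, (x - v i) =
      -∑ i ∈ s, P.eval (v i) / (∏ j ∈ s.erase i, (v i - v j)) * log (-v i) := by
  have hpf : ∀ x ∈ Set.Ioi (0 : ℝ), P.eval x / ∏ i ∈ s, (x - v i) =
      ∑ i ∈ s, P.eval (v i) / (∏ j ∈ s.erase i, (v i - v j)) / (x + -v i) := fun x hx => by
    simp_rw [← sub_eq_add_neg]
    exact Lagrange.eval_div_prod_sub_eq_sum_s3 hvs (degree_le_natDegree.trans_lt
      (by exact_mod_cast (by omega))) fun i hi => ((hv i hi).trans (Set.mem_Ioi.1 hx)).ne'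
  rw [setIntegral_congr_fun measurableSet_Ioi hpf]
  refine integral_Ioi_sum_div_add (fun i hi => neg_pos.2 (hv i hi))
    (Lagrange.sum_eval_div_prod_sub_eq_zero hvs hP) fun x hx => ?_
  rw [← hpf x hx]
  exact div_nonneg (hP_nonneg x hx)
    (prod_nonneg fun i hi => (sub_pos.2 ((hv i hi).trans hx)).le)

theorem neg_sq_pow_div_prod_erase_sq_sub_sq {m n k : ℕ} (hn : 1 ≤ n) (hk : 1 ≤ k)
    (hkm : k ≤ m) :
    (-(k : ℝ) ^ 2) ^ (n - 1) / ∏ j ∈ (Finset.Icc 1 m).erase k, ((j : ℝ) ^ 2 - k ^ 2) =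
      2 * (-1) ^ ((k : ℤ) - n) * (k : ℝ) ^ (2 * n) / ((m + k)! * (m - k)!) := by
  rw [eq_div_of_mul_eq (by positivity)
    ((mul_comm _ _).trans (two_mul_sq_mul_prod_erase_sq_sub_sq (R := ℝ) hk hkm)),
    zpow_natCast_sub_natCast₀ (by norm_num)]
  obtain ⟨a, rfl⟩ : ∃ a, n = a + 1 := ⟨n - 1, by omega⟩
  obtain ⟨b, rfl⟩ : ∃ b, k = b + 1 := ⟨k - 1, by omega⟩
  simp only [Nat.add_sub_cancel]
  field_simp
  have hsq : ∀ c : ℕ, ((-1 : ℝ) ^ c) ^ 2 = 1 := fun c => by rw [← pow_mul, pow_mul']; simp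
  rw [neg_pow]
  linear_combination ((b + 1 : ℕ) : ℝ) ^ (2 * (a + 1)) * (hsq b - hsq a)

/-- Value of `∫₀^∞ ρ^{n-1} / ∏_{k=1}^m (ρ + k²) dρ` for integer `n ∈ {1,…,m-1}`. -/
theorem stmt3 (m n : ℕ) (hn : 1 ≤ n) (hnm : n < m) :
    ∫ ρ in Set.Ioi (0 : ℝ), ρ ^ (n - 1) / ∏ k ∈ Finset.Icc 1 m, (ρ + (k : ℝ) ^ 2) =
      4 * ∑ k ∈ Finset.Icc 1 m,
        (-1 : ℝ) ^ ((k : ℤ) - (n : ℤ) + 1) * (k : ℝ) ^ (2 * n) * Real.log k /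
          ((Nat.factorial (m + k) : ℝ) * (Nat.factorial (m - k) : ℝ)) := by
  have hinj : Set.InjOn (fun k : ℕ => -(k : ℝ) ^ 2) (Finset.Icc 1 m) := fun a _ b _ hab => by
    simpa using hab
  have hneg : ∀ k ∈ Finset.Icc 1 m, -(k : ℝ) ^ 2 < 0 := fun k hk => by
    have : 1 ≤ k := (Finset.mem_Icc.1 hk).1
    simp only [neg_lt_zero]
    positivity
  have hdeg : ((X : ℝ[X]) ^ (n - 1)).natDegree + 1 < #(Finset.Icc 1 m) := by
    simp only [natDegree_pow, natDegree_X, Nat.card_Icc]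
    omega
  have h := integral_Ioi_eval_div_prod_sub hinj hneg hdeg fun x hx => by
    simp only [eval_pow, eval_X]; positivity
  simp only [eval_pow, eval_X, sub_neg_eq_add, neg_neg, neg_add_eq_sub] at h
  rw [h, mul_sum, ← sum_neg_distrib]
  refine sum_congr rfl fun k hk => ?_
  obtain ⟨hk1, hkm⟩ := Finset.mem_Icc.1 hk
  rw [neg_sq_pow_div_prod_erase_sq_sub_sq hn hk1 hkm, log_pow, zpow_add_one₀ (by norm_num)]
  push_cast
  ring

end
end

section
/- Let m ∈ ℕ. Then for every n ∈ ℕ₀ with n < m one has ∑_{k=-m}^{m} (-1)^k · C(2m, m-k) · k^{2n} = 0 (with the convention 0⁰ = 1 for the k = 0, n = 0 term), and moreover ∑_{k=-m}^{m} (-1)^k · C(2m, m-k) · k^{2m} = (-1)^m (2m)!. -/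
open MeasureTheory Real Set
open scoped Classical BigOperators RealInnerProductSpace

noncomputable section

/- Reindexing `k = j - m` turns the sum into `(-1)^m` times the `2m`-th forward difference of
`x ↦ x ^ d` at `-m`; forward differences of order `2m` annihilate polynomials of degree `< 2m`
and send `x ^ (2m)` to the constant `(2m)!`. -/

open fwdDiff in
theorem sum_Icc_neg_one_zpow_mul_choose_mul_eq_fwdDiff_iter (m : ℕ) (f : ℝ → ℝ) :
    ∑ k ∈ Finset.Icc (-(m : ℤ)) m,
        (-1 : ℝ) ^ k * ((2 * m).choose ((m : ℤ) - k).toNat : ℝ) * f k =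
      (-1 : ℝ) ^ m * Δ_[1] ^[2 * m] f (-m) := by
  rw [fwdDiff_iter_eq_sum_shift, Finset.mul_sum]
  refine Finset.sum_nbij' (fun k => (k + m).toNat) (fun j => (j : ℤ) - m) ?_ ?_ ?_ ?_ ?_
  · intro k hk; simp only [Finset.mem_Icc, Finset.mem_range] at hk ⊢; omega
  · intro j hj; simp only [Finset.mem_Icc, Finset.mem_range] at hj ⊢; omega
  · intro k hk; simp only [Finset.mem_Icc] at hk; omega
  · intro j _; simp
  · intro k hk
    simp only [Finset.mem_Icc] at hk
    obtain ⟨j, rfl⟩ : ∃ j : ℕ, k = j - m := ⟨(k + m).toNat, by omega⟩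
    have hj : j ≤ 2 * m := by omega
    have hchoose : ((m : ℤ) - (j - m)).toNat = 2 * m - j := by omega
    have hsign : (-1 : ℝ) ^ ((j : ℤ) - m) = (-1) ^ m * (-1) ^ (2 * m - j) := by
      rw [← pow_add, ← zpow_natCast, Nat.cast_add, Nat.cast_sub hj]
      simp only [neg_one_zpow_eq_ite, Int.even_iff]
      congr 1
      exact propext (by omega)
    simp only [hchoose, hsign, Nat.choose_symm hj, show ((j : ℤ) - m + m).toNat = j by omega,
      zsmul_eq_mul, nsmul_one, neg_add_eq_sub]
    push_cast
    ring

/-- Vanishing moments of the binomial weights, and the top moment. -/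
theorem stmt6 (m : ℕ) :
    (∀ n : ℕ, n < m →
        ∑ k ∈ Finset.Icc (-(m : ℤ)) (m : ℤ),
            (-1 : ℝ) ^ k * ((2 * m).choose ((m : ℤ) - k).toNat : ℝ) * (k : ℝ) ^ (2 * n) = 0) ∧
      ∑ k ∈ Finset.Icc (-(m : ℤ)) (m : ℤ),
          (-1 : ℝ) ^ k * ((2 * m).choose ((m : ℤ) - k).toNat : ℝ) * (k : ℝ) ^ (2 * m) =
        (-1 : ℝ) ^ m * ((2 * m).factorial : ℝ) := by
  refine ⟨fun n hn => ?_, ?_⟩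
  · rw [sum_Icc_neg_one_zpow_mul_choose_mul_eq_fwdDiff_iter m (· ^ (2 * n)),
      fwdDiff_iter_pow_eq_zero_of_lt (by omega), Pi.zero_apply, mul_zero]
  · rw [sum_Icc_neg_one_zpow_mul_choose_mul_eq_fwdDiff_iter m (· ^ (2 * m)),
      fwdDiff_iter_eq_factorial, Pi.natCast_apply]

end
end

section
/- Let n ∈ ℕ, n ≥ 1, and let g : ℝ → ℝ be 2n-times continuously differentiable. Then for all x, t ∈ ℝ, δ_n g(x,t) = (-1)^n t^{2n} ∫_{[0,1]^{2n}} g^{(2n)}(x + ∑_{k=1}^{n} (t_{k,1} - t_{k,2}) t) dt_{1,1} … dt_{n,1} dt_{1,2} … dt_{n,2}, where the integral is over the 2n variables t_{1,1}, …, t_{n,1}, t_{1,2}, …, t_{n,2} ∈ [0,1]. -/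
/-!
With `Δ_h f (y) = f (y + h) - f y`, one has `Δ_{-t} f (y) = -Δ_t f (y - t)`, hence
`Δ_t^n Δ_{-t}^n f (x) = (-1)^n Δ_t^{2n} f (x - n t)`, whose binomial expansion is exactly
`δ_n f (x, t)`.
Iterating the fundamental theorem of calculus gives
`Δ_h^n f (y) = h^n ∫_{[0,1]^n} f^{(n)} (y + (∑ v_k) h) dv`. Since `Δ_{-t}` commutes with
differentiation, applying this to `Δ_t^n` and then to `Δ_{-t}^n` yields the double integral.
-/

open MeasureTheory Real Set
open scoped Classical BigOperators RealInnerProductSpace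

noncomputable section

open fwdDiff

section FiniteDifference

variable {M G : Type*} [AddCommGroup M] [AddCommGroup G]

theorem fwdDiff_iter_neg_apply (h : M) (f : M → G) (n : ℕ) (y : M) :
    Δ_[-h] ^[n] f y = (-1 : ℤ) ^ n • Δ_[h] ^[n] f (y - n • h) := by
  induction n generalizing y with
  | zero => simp
  | succ n ih =>
    rw [Function.iterate_succ_apply', fwdDiff, ih, ih, Function.iterate_succ_apply', fwdDiff,
      pow_succ, mul_smul, ← smul_sub, neg_one_smul, neg_sub, succ_nsmul]
    congr 4 <;> abel_nf

theorem Finset.sum_Icc_neg_eq_sum_range {R : Type*} [AddCommMonoid R] (n : ℕ) (F : ℤ → R) :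
    ∑ k ∈ Finset.Icc (-(n : ℤ)) n, F k = ∑ m ∈ Finset.range (2 * n + 1), F (m - n) := by
  refine Finset.sum_nbij' (fun k => (k + n).toNat) (fun m => (m : ℤ) - n) ?_ ?_ ?_ ?_ ?_ <;>
    intro k hk <;>
    simp only [Finset.mem_Icc, Finset.mem_range] at hk ⊢ <;>
    first | omega | (congr 1; omega)

theorem deltaOp_eq_fwdDiff_iter {E : Type*} [AddCommGroup E] [Module ℝ E] (n : ℕ)
    (u : E → ℝ) (x y : E) :
    deltaOp n u x y = Δ_[y] ^[n] (Δ_[-y] ^[n] u) x := by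
  have hneg : Δ_[-y] ^[n] u = (-1 : ℤ) ^ n • fun z => Δ_[y] ^[n] u (z + -(n • y)) :=
    funext fun z => by rw [fwdDiff_iter_neg_apply, sub_eq_add_neg]; rfl
  rw [hneg, fwdDiff_iter_const_smul, Pi.smul_apply, fwdDiff_iter_comp_add,
    ← Function.iterate_add_apply, fwdDiff_iter_eq_sum_shift, deltaOp,
    Finset.sum_Icc_neg_eq_sum_range, Finset.smul_sum, ← two_mul]
  refine Finset.sum_congr rfl fun m hm => ?_
  replace hm : m ≤ 2 * n := Nat.lt_succ_iff.mp (Finset.mem_range.mp hm)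
  have hsign : (-1 : ℝ) ^ ((m : ℤ) - n) = (-1) ^ n * (-1) ^ (2 * n - m) := by
    rw [show (m : ℤ) - n = n - (2 * n - m : ℕ) by omega, zpow_sub₀ (by norm_num), zpow_natCast,
      zpow_natCast, div_eq_mul_inv, ← inv_pow, inv_neg_one]
  have hchoose : (2 * n).choose ((n : ℤ) - (m - n)).toNat = (2 * n).choose m := by
    rw [show ((n : ℤ) - (m - n)).toNat = 2 * n - m by omega, Nat.choose_symm hm]
  have hpoint : x + ((m : ℤ) - n) • y = x + -(n • y) + m • y := by
    rw [sub_smul, natCast_zsmul, natCast_zsmul]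
    abel
  rw [hsign, hchoose, hpoint, zsmul_eq_mul, zsmul_eq_mul]
  push_cast
  ring

end FiniteDifference

section Calculus

variable {𝕜 F : Type*} [NontriviallyNormedField 𝕜] [NormedAddCommGroup F] [NormedSpace 𝕜 F]

theorem ContDiff.fwdDiff {k : WithTop ℕ∞} {f : 𝕜 → F} (hf : ContDiff 𝕜 k f) (h : 𝕜) :
    ContDiff 𝕜 k (Δ_[h] f) :=
  (hf.comp (contDiff_id.add contDiff_const)).sub hf

theorem ContDiff.fwdDiff_iter {k : WithTop ℕ∞} {f : 𝕜 → F} (hf : ContDiff 𝕜 k f) (h : 𝕜)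
    (m : ℕ) : ContDiff 𝕜 k (Δ_[h] ^[m] f) := by
  induction m with
  | zero => exact hf
  | succ m ih => exact Function.iterate_succ_apply' _ m f ▸ ih.fwdDiff h

theorem iteratedDeriv_fwdDiff {n : ℕ} {f : 𝕜 → F} (hf : ContDiff 𝕜 n f) (h : 𝕜) :
    iteratedDeriv n (Δ_[h] f) = Δ_[h] (iteratedDeriv n f) := by
  have hshift : ContDiff 𝕜 n fun z => f (z + h) := hf.comp (contDiff_id.add contDiff_const)
  ext y
  exact (iteratedDeriv_fun_sub hshift.contDiffAt hf.contDiffAt).trans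
    (congrArg (· - _) (congrFun (iteratedDeriv_comp_add_const n f h) y))

theorem iteratedDeriv_fwdDiff_iter {n : ℕ} {f : 𝕜 → F} (hf : ContDiff 𝕜 n f) (h : 𝕜) (m : ℕ) :
    iteratedDeriv n (Δ_[h] ^[m] f) = Δ_[h] ^[m] (iteratedDeriv n f) := by
  induction m with
  | zero => rfl
  | succ m ih =>
    rw [Function.iterate_succ_apply', Function.iterate_succ_apply',
      iteratedDeriv_fwdDiff (hf.fwdDiff_iter h m), ih]

end Calculus

section Integral

variable {F : Type*} [NormedAddCommGroup F] [NormedSpace ℝ F]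

theorem sub_eq_smul_integral_deriv [CompleteSpace F] {G : ℝ → F} (hd : Differentiable ℝ G)
    (hc : Continuous (deriv G)) (x h : ℝ) :
    G (x + h) - G x = h • ∫ a in Icc (0 : ℝ) 1, deriv G (x + a * h) := by
  have hcomm : (fun a => deriv G (x + a * h)) = fun a => deriv G (h * a + x) := by
    ext a
    ring_nf
  rw [integral_Icc_eq_integral_Ioc, ← intervalIntegral.integral_of_le zero_le_one, hcomm,
    intervalIntegral.smul_integral_comp_mul_add, mul_zero, mul_one, zero_add, add_comm h,
    intervalIntegral.integral_deriv_eq_sub (fun y _ => hd y) (hc.intervalIntegrable _ _)]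

theorem setIntegral_Icc_pi_succ {n : ℕ} {Φ : (Fin (n + 1) → ℝ) → F} (hΦ : Continuous Φ) :
    ∫ v in Icc (0 : Fin (n + 1) → ℝ) 1, Φ v =
      ∫ y in Icc (0 : Fin n → ℝ) 1, ∫ a in Icc (0 : ℝ) 1, Φ (Fin.cons a y) := by
  set e := (MeasurableEquiv.piFinSuccAbove (fun _ : Fin (n + 1) => ℝ) 0).symm
  have he : MeasurePreserving e := (volume_preserving_piFinSuccAbove _ 0).symm
  have hIcc : e ⁻¹' Icc 0 1 = Icc (0 : ℝ) 1 ×ˢ Icc (0 : Fin n → ℝ) 1 :=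
    ((Fin.insertNthOrderIso (fun _ => ℝ) 0).preimage_Icc _ _).trans (Icc_prod_eq _ _)
  rw [← he.map_eq, setIntegral_map_equiv, hIcc, Measure.volume_eq_prod, ← setIntegral_prod_swap,
    setIntegral_prod]
  · simp [e, Fin.consEquiv]
  · have hcont : Continuous fun z : (Fin n → ℝ) × ℝ => Φ (e z.swap) :=
      hΦ.comp (continuous_snd.finInsertNth (A := fun _ => ℝ) 0 continuous_fst)
    exact hcont.continuousOn.integrableOn_compact (isCompact_Icc.prod isCompact_Icc)

theorem fwdDiff_iter_eq_integral [CompleteSpace F] {n : ℕ} {g : ℝ → F} (hg : ContDiff ℝ n g)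
    (h x : ℝ) :
    Δ_[h] ^[n] g x =
      h ^ n • ∫ v in Icc (0 : Fin n → ℝ) 1, iteratedDeriv n g (x + (∑ k, v k) * h) := by
  induction n generalizing x with
  | zero => simp [measureReal_def, Real.volume_Icc_pi]
  | succ n ih =>
    have hD : Continuous (iteratedDeriv (n + 1) g) := hg.continuous_iteratedDeriv' (n + 1)
    have hshift (c : ℝ) : Continuous fun v : Fin n → ℝ => iteratedDeriv n g (c + (∑ k, v k) * h) :=
      (hg.continuous_iteratedDeriv n (by norm_cast; omega)).comp (by fun_prop)
    have hstep (y : Fin n → ℝ) :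
        iteratedDeriv n g (x + h + (∑ k, y k) * h) - iteratedDeriv n g (x + (∑ k, y k) * h) =
          h • ∫ a in Icc (0 : ℝ) 1, iteratedDeriv (n + 1) g (x + (∑ k, y k + a) * h) := by
      rw [add_right_comm x h, sub_eq_smul_integral_deriv (hg.differentiable_iteratedDeriv' n)
        (by rwa [← iteratedDeriv_succ]), iteratedDeriv_succ]
      simp_rw [add_mul, add_assoc]
    have hg' : ContDiff ℝ n g := hg.of_le (by norm_cast; omega)
    rw [Function.iterate_succ_apply', fwdDiff, ih hg', ih hg', ← smul_sub,
      ← integral_sub ((hshift _).integrableOn_Icc) ((hshift _).integrableOn_Icc)]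
    simp_rw [hstep, integral_smul, smul_smul, ← pow_succ]
    rw [setIntegral_Icc_pi_succ
      (Φ := fun v => iteratedDeriv (n + 1) g (x + (∑ k, v k) * h)) (hD.comp (by fun_prop))]
    simp_rw [Fin.sum_cons, add_comm]

end Integral

theorem stmt7_general (n : ℕ) (g : ℝ → ℝ) (hg : ContDiff ℝ ((2 * n : ℕ) : ℕ∞) g)
    (x t : ℝ) :
    deltaOp n g x t =
      (-1 : ℝ) ^ n * t ^ (2 * n) *
        ∫ v : Fin n → ℝ in Set.Icc 0 1, ∫ w : Fin n → ℝ in Set.Icc 0 1,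
          iteratedDeriv (2 * n) g (x + (∑ k, (v k - w k)) * t) := by
  have hg' : ContDiff ℝ (n + n : ℕ) g := by rwa [← two_mul]
  have hgn : ContDiff ℝ n g := hg'.of_le (by norm_cast; omega)
  have hgnn : ContDiff ℝ n (iteratedDeriv n g) := by
    rw [iteratedDeriv_eq_iterate]
    exact hg'.iterate_deriv' n n
  have hcomp : iteratedDeriv n (iteratedDeriv n g) = iteratedDeriv (2 * n) g := by
    simp only [iteratedDeriv_eq_iterate, ← Function.iterate_add_apply, two_mul]
  have hinner (v : Fin n → ℝ) :
      Δ_[-t] ^[n] (iteratedDeriv n g) (x + (∑ k, v k) * t) =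
        (-t) ^ n * ∫ w in Icc (0 : Fin n → ℝ) 1,
          iteratedDeriv (2 * n) g (x + (∑ k, (v k - w k)) * t) := by
    simp_rw [fwdDiff_iter_eq_integral hgnn, hcomp, smul_eq_mul, Finset.sum_sub_distrib, sub_mul,
      mul_neg, ← sub_eq_add_neg, add_sub_assoc]
  rw [deltaOp_eq_fwdDiff_iter, fwdDiff_iter_eq_integral (hgn.fwdDiff_iter _ _),
    iteratedDeriv_fwdDiff_iter hgn]
  simp_rw [hinner, integral_const_mul, smul_eq_mul]
  ring

/-- Integral representation of the finite difference `δ_n g(x,t)`. -/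
theorem stmt7 (n : ℕ) (hn : 1 ≤ n) (g : ℝ → ℝ) (hg : ContDiff ℝ ((2 * n : ℕ) : ℕ∞) g)
    (x t : ℝ) :
    deltaOp n g x t =
      (-1 : ℝ) ^ n * t ^ (2 * n) *
        ∫ v : Fin n → ℝ in Set.Icc 0 1, ∫ w : Fin n → ℝ in Set.Icc 0 1,
          iteratedDeriv (2 * n) g (x + (∑ k, (v k - w k)) * t) :=
  stmt7_general n g hg x t

end
end

section
/- Let N ∈ ℕ with N ≥ 1, s > 0, n, m ∈ ℕ with s < m, and u, v ∈ C_c^∞(ℝ^N). Then ∫_{ℝ^N} ∫_{ℝ^N} δ_n u(x,y) δ_m v(x,y) / |y|^{N+2s} dx dy = ∫_{ℝ^N} ∫_{ℝ^N} δ_{n+m} u(x,y) · v(x) / |y|^{N+2s} dx dy. -/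
open MeasureTheory Real Set
open scoped Classical BigOperators RealInnerProductSpace

noncomputable section

lemma neg_one_zpow_nat_sub (a b : ℕ) :
    (-1 : ℝ) ^ ((a : ℤ) - (b : ℤ)) = (-1 : ℝ) ^ a * (-1 : ℝ) ^ b := by
  rw [zpow_sub₀ (by norm_num : (-1:ℝ) ≠ 0), zpow_natCast, zpow_natCast,
    div_eq_mul_inv, ← inv_pow]
  norm_num

-- reindex lemma: k = m - i
lemma sum_Icc_reindex' (m : ℕ) (h : ℤ → ℝ) :
    ∑ k ∈ Finset.Icc (-(m : ℤ)) (m : ℤ),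
      (-1 : ℝ) ^ k * ((2 * m).choose ((m : ℤ) - k).toNat : ℝ) * h k
    = (-1 : ℝ) ^ m * ∑ i ∈ Finset.range (2 * m + 1),
        (-1 : ℝ) ^ i * ((2 * m).choose i : ℝ) * h ((m : ℤ) - i) := by
  rw [Finset.mul_sum]
  refine Finset.sum_nbij' (fun k => ((m : ℤ) - k).toNat) (fun i => (m : ℤ) - i)
    ?_ ?_ ?_ ?_ ?_
  · intro k hk; simp only [Finset.mem_Icc] at hk; simp only [Finset.mem_range]; omega
  · intro i hi; simp only [Finset.mem_range] at hi; simp only [Finset.mem_Icc]; omega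
  · intro k hk; simp only [Finset.mem_Icc] at hk; omega
  · intro i hi; simp only [Finset.mem_range] at hi; omega
  · intro k hk
    simp only [Finset.mem_Icc] at hk
    have hk2 : k = (m : ℤ) - (((m : ℤ) - k).toNat : ℕ) := by omega
    obtain ⟨t, ht⟩ : ∃ t : ℕ, ((m : ℤ) - k).toNat = t := ⟨_, rfl⟩
    have hk3 : k = (m : ℤ) - (t : ℤ) := by omega
    subst hk3
    have h1 : ((m : ℤ) - ((m : ℤ) - (t : ℤ))).toNat = t := by omega
    rw [h1, neg_one_zpow_nat_sub]
    ring

-- reindex lemma: k = i - m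
lemma sum_Icc_reindex (m : ℕ) (h : ℤ → ℝ) :
    ∑ k ∈ Finset.Icc (-(m : ℤ)) (m : ℤ),
      (-1 : ℝ) ^ k * ((2 * m).choose ((m : ℤ) - k).toNat : ℝ) * h k
    = (-1 : ℝ) ^ m * ∑ i ∈ Finset.range (2 * m + 1),
        (-1 : ℝ) ^ i * ((2 * m).choose i : ℝ) * h ((i : ℤ) - m) := by
  rw [Finset.mul_sum]
  refine Finset.sum_nbij' (fun k => (k + (m : ℤ)).toNat) (fun i => (i : ℤ) - m)
    ?_ ?_ ?_ ?_ ?_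
  · intro k hk; simp only [Finset.mem_Icc] at hk; simp only [Finset.mem_range]; omega
  · intro i hi; simp only [Finset.mem_range] at hi; simp only [Finset.mem_Icc]; omega
  · intro k hk; simp only [Finset.mem_Icc] at hk; omega
  · intro i hi; simp only [Finset.mem_range] at hi; omega
  · intro k hk
    simp only [Finset.mem_Icc] at hk
    obtain ⟨t, ht⟩ : ∃ t : ℕ, (k + (m : ℤ)).toNat = t := ⟨_, rfl⟩
    have hk3 : k = (t : ℤ) - (m : ℤ) := by omega
    subst hk3
    have h1 : (((t : ℤ) - (m : ℤ)) + (m : ℤ)).toNat = t := by omega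
    have h2 : ((m : ℤ) - ((t : ℤ) - (m : ℤ))).toNat = 2 * m - t := by omega
    have htle : t ≤ 2 * m := by omega
    rw [h1, h2, Nat.choose_symm htle, neg_one_zpow_nat_sub]
    ring


lemma double_sum_vandermonde (a b : ℕ) (F : ℕ → ℝ) :
    ∑ i ∈ Finset.range (a + 1), ∑ k ∈ Finset.range (b + 1),
      (-1 : ℝ) ^ (i + k) * (a.choose i : ℝ) * (b.choose k : ℝ) * F (i + k)
    = ∑ l ∈ Finset.range (a + b + 1), (-1 : ℝ) ^ l * ((a + b).choose l : ℝ) * F l := by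
  classical
  set g : ℕ × ℕ → ℝ := fun p =>
    (-1 : ℝ) ^ (p.1 + p.2) * (a.choose p.1 : ℝ) * (b.choose p.2 : ℝ) * F (p.1 + p.2) with hg
  have hzero : ∀ p : ℕ × ℕ, a < p.1 ∨ b < p.2 → g p = 0 := by
    rintro p (hp | hp) <;> simp [hg, Nat.choose_eq_zero_of_lt hp]
  have hL : ∑ i ∈ Finset.range (a + 1), ∑ k ∈ Finset.range (b + 1),
      (-1 : ℝ) ^ (i + k) * (a.choose i : ℝ) * (b.choose k : ℝ) * F (i + k)
      = ∑ p ∈ Finset.range (a + 1) ×ˢ Finset.range (b + 1), g p := by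
    rw [Finset.sum_product]
  have hR : ∑ l ∈ Finset.range (a + b + 1), (-1 : ℝ) ^ l * ((a + b).choose l : ℝ) * F l
      = ∑ l ∈ Finset.range (a + b + 1), ∑ p ∈ Finset.HasAntidiagonal.antidiagonal l, g p := by
    refine Finset.sum_congr rfl fun l _ => ?_
    rw [Nat.add_choose_eq]
    push_cast
    rw [Finset.mul_sum, Finset.sum_mul]
    refine Finset.sum_congr rfl fun p hp => ?_
    have hpl : p.1 + p.2 = l := Finset.HasAntidiagonal.mem_antidiagonal.1 hp
    simp only [hg, hpl]
    ring
  have hdisj : (↑(Finset.range (a + b + 1)) : Set ℕ).PairwiseDisjoint Finset.HasAntidiagonal.antidiagonal := by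
    intro l _ l' _ hne
    refine Finset.disjoint_left.2 fun p hp hp' => hne ?_
    have h1 := Finset.HasAntidiagonal.mem_antidiagonal.1 hp
    have h2 := Finset.HasAntidiagonal.mem_antidiagonal.1 hp'
    omega
  rw [hL, hR, ← Finset.sum_biUnion hdisj]
  refine Finset.sum_subset ?_ ?_
  · intro p hp
    simp only [Finset.mem_product, Finset.mem_range] at hp
    exact Finset.mem_biUnion.2 ⟨p.1 + p.2, Finset.mem_range.2 (by omega),
      Finset.HasAntidiagonal.mem_antidiagonal.2 rfl⟩
  · intro p hp hnp
    simp only [Finset.mem_product, Finset.mem_range, not_and_or, not_lt] at hnp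
    exact hzero p (by omega)


lemma comb {E : Type*} [AddCommGroup E] [Module ℝ E] (n m : ℕ) (u : E → ℝ) (x y : E) :
    ∑ j ∈ Finset.Icc (-(m : ℤ)) (m : ℤ),
      (-1 : ℝ) ^ j * ((2 * m).choose ((m : ℤ) - j).toNat : ℝ) *
        deltaOp n u (x + (-j) • y) y
    = deltaOp (n + m) u x y := by
  have alt : ∀ z : E, deltaOp n u z y
      = (-1 : ℝ) ^ n * ∑ k ∈ Finset.range (2 * n + 1),
          (-1 : ℝ) ^ k * ((2 * n).choose k : ℝ) * u (z + ((k : ℤ) - n) • y) :=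
    fun z => sum_Icc_reindex n (fun k => u (z + k • y))
  have hRHS : deltaOp (n + m) u x y
      = (-1 : ℝ) ^ (n + m) * ∑ l ∈ Finset.range (2 * (n + m) + 1),
          (-1 : ℝ) ^ l * ((2 * (n + m)).choose l : ℝ) * u (x + ((l : ℤ) - (n + m)) • y) :=
    sum_Icc_reindex (n + m) (fun l => u (x + l • y))
  rw [hRHS, sum_Icc_reindex' m (fun j => deltaOp n u (x + (-j) • y) y)]
  have h2 : 2 * (n + m) = 2 * m + 2 * n := by ring
  rw [h2]
  rw [← double_sum_vandermonde (2 * m) (2 * n) (fun l => u (x + ((l : ℤ) - (n + m)) • y))]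
  have h3 : ((-1 : ℝ) ^ (n + m)) = (-1 : ℝ) ^ m * (-1 : ℝ) ^ n := by rw [pow_add]; ring
  rw [h3, mul_assoc]
  refine congrArg _ ?_
  rw [Finset.mul_sum]
  refine Finset.sum_congr rfl fun i hi => ?_
  rw [alt (x + (-(((m : ℤ)) - i)) • y), Finset.mul_sum, Finset.mul_sum, Finset.mul_sum]
  refine Finset.sum_congr rfl fun k hk => ?_
  have harg : (x + (-(((m : ℤ)) - i)) • y) + (((k : ℤ) - n)) • y
      = x + (((i + k : ℕ) : ℤ) - (((n : ℤ)) + m)) • y := by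
    rw [add_assoc, ← add_zsmul]
    congr 2
    push_cast
    ring
  rw [harg]
  push_cast
  ring


variable {N : ℕ}

lemma deltaCont (n : ℕ) {u : EuclideanSpace ℝ (Fin N) → ℝ} (hu : Continuous u)
    (y : EuclideanSpace ℝ (Fin N)) : Continuous (fun x => deltaOp n u x y) := by
  refine continuous_finset_sum _ fun k _ => ?_
  exact continuous_const.mul (hu.comp (continuous_id.add continuous_const))

lemma key (n m : ℕ) (u v : EuclideanSpace ℝ (Fin N) → ℝ)
    (hu : Continuous u) (husupp : HasCompactSupport u)
    (hv : Continuous v) (hvsupp : HasCompactSupport v)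
    (y : EuclideanSpace ℝ (Fin N)) :
    ∫ x, deltaOp n u x y * deltaOp m v x y = ∫ x, deltaOp (n + m) u x y * v x := by
  have hvtrans : ∀ j : ℤ, HasCompactSupport (fun x : EuclideanSpace ℝ (Fin N) => v (x + j • y)) :=
    fun j => hvsupp.comp_homeomorph (Homeomorph.addRight (j • y))
  have hint1 : ∀ j : ℤ, Integrable (fun x : EuclideanSpace ℝ (Fin N) =>
      (-1 : ℝ) ^ j * ((2 * m).choose ((m : ℤ) - j).toNat : ℝ) *
        (deltaOp n u x y * v (x + j • y))) := by
    intro j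
    have hc : Continuous (fun x : EuclideanSpace ℝ (Fin N) =>
        (-1 : ℝ) ^ j * ((2 * m).choose ((m : ℤ) - j).toNat : ℝ) *
          (deltaOp n u x y * v (x + j • y))) :=
      continuous_const.mul (((deltaCont n hu y)).mul
        (hv.comp (continuous_id.add continuous_const)))
    refine hc.integrable_of_hasCompactSupport ?_
    have heq : (fun x : EuclideanSpace ℝ (Fin N) =>
        (-1 : ℝ) ^ j * ((2 * m).choose ((m : ℤ) - j).toNat : ℝ) *
          (deltaOp n u x y * v (x + j • y)))
        = (fun x : EuclideanSpace ℝ (Fin N) =>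
        (-1 : ℝ) ^ j * ((2 * m).choose ((m : ℤ) - j).toNat : ℝ) * deltaOp n u x y) *
        (fun x => v (x + j • y)) := by
      funext x; simp [mul_assoc]
    rw [heq]
    exact (hvtrans j).mul_left
  have hint2 : ∀ j : ℤ, Integrable (fun x : EuclideanSpace ℝ (Fin N) =>
      (-1 : ℝ) ^ j * ((2 * m).choose ((m : ℤ) - j).toNat : ℝ) *
        (deltaOp n u (x + (-j) • y) y * v x)) := by
    intro j
    have hc : Continuous (fun x : EuclideanSpace ℝ (Fin N) =>
        (-1 : ℝ) ^ j * ((2 * m).choose ((m : ℤ) - j).toNat : ℝ) *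
          (deltaOp n u (x + (-j) • y) y * v x)) :=
      continuous_const.mul
        (((deltaCont n hu y).comp (continuous_id.add continuous_const)).mul hv)
    refine hc.integrable_of_hasCompactSupport ?_
    have heq : (fun x : EuclideanSpace ℝ (Fin N) =>
        (-1 : ℝ) ^ j * ((2 * m).choose ((m : ℤ) - j).toNat : ℝ) *
          (deltaOp n u (x + (-j) • y) y * v x))
        = (fun x : EuclideanSpace ℝ (Fin N) =>
        (-1 : ℝ) ^ j * ((2 * m).choose ((m : ℤ) - j).toNat : ℝ) *
          deltaOp n u (x + (-j) • y) y) * v := by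
      funext x; simp [mul_assoc]
    rw [heq]
    exact hvsupp.mul_left
  calc ∫ x, deltaOp n u x y * deltaOp m v x y
      = ∫ x, ∑ j ∈ Finset.Icc (-(m : ℤ)) (m : ℤ),
          (-1 : ℝ) ^ j * ((2 * m).choose ((m : ℤ) - j).toNat : ℝ) *
            (deltaOp n u x y * v (x + j • y)) := by
        refine integral_congr_ae (Filter.Eventually.of_forall fun x => ?_)
        show deltaOp n u x y * deltaOp m v x y
          = ∑ j ∈ Finset.Icc (-(m : ℤ)) (m : ℤ),
            (-1 : ℝ) ^ j * ((2 * m).choose ((m : ℤ) - j).toNat : ℝ) *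
              (deltaOp n u x y * v (x + j • y))
        have hD : deltaOp m v x y = ∑ j ∈ Finset.Icc (-(m : ℤ)) (m : ℤ),
            (-1 : ℝ) ^ j * ((2 * m).choose ((m : ℤ) - j).toNat : ℝ) * v (x + j • y) := rfl
        rw [hD, Finset.mul_sum]
        exact Finset.sum_congr rfl fun j _ => by ring
    _ = ∑ j ∈ Finset.Icc (-(m : ℤ)) (m : ℤ), ∫ x,
          (-1 : ℝ) ^ j * ((2 * m).choose ((m : ℤ) - j).toNat : ℝ) *
            (deltaOp n u x y * v (x + j • y)) :=
        integral_finset_sum _ fun j _ => hint1 j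
    _ = ∑ j ∈ Finset.Icc (-(m : ℤ)) (m : ℤ), ∫ x,
          (-1 : ℝ) ^ j * ((2 * m).choose ((m : ℤ) - j).toNat : ℝ) *
            (deltaOp n u (x + (-j) • y) y * v x) := by
        refine Finset.sum_congr rfl fun j _ => ?_
        rw [← integral_add_right_eq_self (μ := volume) (fun x : EuclideanSpace ℝ (Fin N) =>
          (-1 : ℝ) ^ j * ((2 * m).choose ((m : ℤ) - j).toNat : ℝ) *
            (deltaOp n u (x + (-j) • y) y * v x)) (j • y)]
        refine integral_congr_ae (Filter.Eventually.of_forall fun x => ?_)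
        have hx : x + j • y + (-j) • y = x := by
          rw [add_assoc, ← add_zsmul]
          simp
        simp only [hx]
    _ = ∫ x, ∑ j ∈ Finset.Icc (-(m : ℤ)) (m : ℤ),
          (-1 : ℝ) ^ j * ((2 * m).choose ((m : ℤ) - j).toNat : ℝ) *
            (deltaOp n u (x + (-j) • y) y * v x) :=
        (integral_finset_sum _ fun j _ => hint2 j).symm
    _ = ∫ x, deltaOp (n + m) u x y * v x := by
        refine integral_congr_ae (Filter.Eventually.of_forall fun x => ?_)
        show ∑ j ∈ Finset.Icc (-(m : ℤ)) (m : ℤ),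
            (-1 : ℝ) ^ j * ((2 * m).choose ((m : ℤ) - j).toNat : ℝ) *
              (deltaOp n u (x + (-j) • y) y * v x)
          = deltaOp (n + m) u x y * v x
        rw [← comb n m u x y, Finset.sum_mul]
        exact Finset.sum_congr rfl fun j _ => by ring

/-- Nonlocal integration by parts for finite differences. -/
theorem stmt13 (N : ℕ) (hN : 1 ≤ N) (s : ℝ) (hs : 0 < s) (n m : ℕ) (hsm : s < m)
    (u v : EuclideanSpace ℝ (Fin N) → ℝ)
    (hu : ContDiff ℝ (⊤ : ℕ∞) u) (husupp : HasCompactSupport u)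
    (hv : ContDiff ℝ (⊤ : ℕ∞) v) (hvsupp : HasCompactSupport v) :
    ∫ y : EuclideanSpace ℝ (Fin N), ∫ x : EuclideanSpace ℝ (Fin N),
        deltaOp n u x y * deltaOp m v x y / ‖y‖ ^ ((N : ℝ) + 2 * s) =
      ∫ y : EuclideanSpace ℝ (Fin N), ∫ x : EuclideanSpace ℝ (Fin N),
        deltaOp (n + m) u x y * v x / ‖y‖ ^ ((N : ℝ) + 2 * s) := by
  refine integral_congr_ae (Filter.Eventually.of_forall fun y => ?_)
  simp only
  rw [show (∫ x : EuclideanSpace ℝ (Fin N),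
      deltaOp n u x y * deltaOp m v x y / ‖y‖ ^ ((N : ℝ) + 2 * s))
      = (∫ x : EuclideanSpace ℝ (Fin N), deltaOp n u x y * deltaOp m v x y) /
          ‖y‖ ^ ((N : ℝ) + 2 * s) from integral_div _ _,
    show (∫ x : EuclideanSpace ℝ (Fin N),
      deltaOp (n + m) u x y * v x / ‖y‖ ^ ((N : ℝ) + 2 * s))
      = (∫ x : EuclideanSpace ℝ (Fin N), deltaOp (n + m) u x y * v x) /
          ‖y‖ ^ ((N : ℝ) + 2 * s) from integral_div _ _,
    key n m u v hu.continuous husupp hv.continuous hvsupp y]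

end
end

section
/- Let N, m ∈ ℕ with N ≥ 1, s ∈ (0,m), and let α ∈ ℕ₀^N be a multi-index with |α| = m. Then 2(m-s) ∫_{B₁} y^{2α} / |y|^{N+2s} dy = ((2α)!/α!) · π^{N/2} / (2^{2m-1} Γ(N/2 + m)), where B₁ is the open unit ball in ℝ^N. -/
/-!
The monomial `y ^ (2α)` is homogeneous of degree `2m`, so in polar coordinates its integral
against any radial weight is its integral `S` over the unit sphere times a one-dimensional radial
integral. For the weight `|y|^{-(N+2s)}` on the unit ball the radial factor is `1 / (2(m-s))`.
For the Gaussian weight `exp(-|y|²)` the radial factor is `Γ(N/2 + m) / 2`, while the integral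
also factorizes over the coordinates into `∏ Γ(αᵢ + 1/2)`; this determines `S`, and
`Γ(k + 1/2) = √π (2k)! / (4^k k!)` gives the closed form.
-/

open MeasureTheory Real Set
open scoped Classical BigOperators RealInnerProductSpace

noncomputable section

open scoped Nat in
theorem Real.Gamma_nat_add_half_eq_factorial (n : ℕ) :
    Gamma (n + 1 / 2) = √π * (2 * n)! / (4 ^ n * n !) := by
  rw [Gamma_nat_add_half]
  cases n with
  | zero => simp
  | succ n =>
    have h := Nat.factorial_eq_mul_doubleFactorial (2 * n + 1)
    rw [show 2 * n + 1 + 1 = 2 * (n + 1) by ring, Nat.doubleFactorial_two_mul] at h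
    rw [show 2 * (n + 1) - 1 = 2 * n + 1 by omega, h]
    push_cast
    field_simp
    rw [show (4 : ℝ) = 2 ^ 2 by norm_num, ← pow_mul, ← pow_mul, mul_comm]

theorem integral_Ioi_pow_mul_exp_neg_sq (k : ℕ) :
    ∫ r in Ioi (0 : ℝ), r ^ k * exp (-r ^ 2) = Gamma ((k + 1) / 2) / 2 := by
  have h := integral_rpow_mul_exp_neg_rpow two_pos (neg_one_lt_zero.trans_le k.cast_nonneg)
  rw [div_eq_inv_mul (1 : ℝ) 2, mul_one, inv_mul_eq_div] at h
  rw [← h]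
  refine setIntegral_congr_fun measurableSet_Ioi fun r _ => ?_
  simp only [rpow_natCast, rpow_two]

theorem integral_pow_mul_exp_neg_sq (a : ℕ) :
    ∫ t : ℝ, t ^ (2 * a) * exp (-t ^ 2) = Gamma (a + 1 / 2) := by
  have h := integral_comp_abs (f := fun t : ℝ => t ^ (2 * a) * exp (-t ^ 2))
  simp only [(even_two_mul a).pow_abs, sq_abs] at h
  rw [h, integral_Ioi_pow_mul_exp_neg_sq]
  push_cast
  ring_nf

theorem integral_Ioi_pow_mul_indicator_Iio_one_rpow (k : ℕ) {p : ℝ} (hp : p < k + 1) :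
    ∫ r in Ioi (0 : ℝ), r ^ k * (Iio 1).indicator (fun r => r ^ (-p)) r = 1 / (k + 1 - p) := by
  have h : ∀ r ∈ Ioi (0 : ℝ), r ^ k * (Iio 1).indicator (fun r => r ^ (-p)) r
      = (Ioo 0 1).indicator (fun r => r ^ ((k : ℝ) - p)) r := by
    intro r (hr : 0 < r)
    by_cases hr1 : r < 1
    · rw [indicator_of_mem (s := Iio 1) hr1, indicator_of_mem (s := Ioo 0 1) ⟨hr, hr1⟩,
        ← rpow_natCast, ← rpow_add hr, sub_eq_add_neg]
    · rw [indicator_of_notMem (s := Iio 1) hr1,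
        indicator_of_notMem (s := Ioo 0 1) fun h => hr1 h.2, mul_zero]
  rw [setIntegral_congr_fun measurableSet_Ioi h, setIntegral_indicator measurableSet_Ioo,
    inter_eq_right.mpr Ioo_subset_Ioi_self, ← integral_Ioc_eq_integral_Ioo,
    ← intervalIntegral.integral_of_le zero_le_one, integral_rpow (Or.inl (by linarith)),
    one_rpow, zero_rpow (by linarith)]
  ring_nf

theorem integral_volumeIoiPow (n : ℕ) (f : ℝ → ℝ) :
    ∫ r : Ioi (0 : ℝ), f r ∂(Measure.volumeIoiPow n) = ∫ r in Ioi (0 : ℝ), r ^ n * f r := by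
  simp only [Measure.volumeIoiPow, ENNReal.ofReal]
  rw [integral_withDensity_eq_integral_smul
      ((measurable_subtype_coe.pow_const _).real_toNNReal),
    integral_subtype_comap measurableSet_Ioi fun r : ℝ => (r ^ n).toNNReal • f r]
  refine setIntegral_congr_fun measurableSet_Ioi fun r (hr : 0 < r) => ?_
  rw [NNReal.smul_def, coe_toNNReal _ (pow_nonneg hr.le _), smul_eq_mul]

theorem integral_homogeneous_mul_fun_norm {E : Type*} [NormedAddCommGroup E] [NormedSpace ℝ E]
    [FiniteDimensional ℝ E] [Nontrivial E] [MeasurableSpace E] [BorelSpace E]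
    (μ : Measure E) [μ.IsAddHaarMeasure] {g : E → ℝ} {d : ℕ}
    (hg : ∀ r : ℝ, 0 < r → ∀ x, g (r • x) = r ^ d * g x) (h : ℝ → ℝ) :
    ∫ x, g x * h ‖x‖ ∂μ =
      (∫ θ : Metric.sphere (0 : E) 1, g θ ∂μ.toSphere) *
        ∫ r in Ioi (0 : ℝ), r ^ (Module.finrank ℝ E - 1 + d) * h r := by
  have hpolar : ∀ x : ({0}ᶜ : Set E), g x * h ‖(x : E)‖ =
      g (homeomorphUnitSphereProd E x).1 *
        (((homeomorphUnitSphereProd E x).2 : ℝ) ^ d * h (homeomorphUnitSphereProd E x).2) := by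
    rintro ⟨x, hx : x ≠ 0⟩
    have hnorm : ‖x‖ ≠ 0 := norm_ne_zero_iff.2 hx
    simp only [homeomorphUnitSphereProd_apply_fst_coe, homeomorphUnitSphereProd_apply_snd_coe]
    have hx_polar := hg ‖x‖ (norm_pos_iff.2 hx) (‖x‖⁻¹ • x)
    rw [smul_inv_smul₀ hnorm] at hx_polar
    rw [hx_polar]
    ring
  calc ∫ x, g x * h ‖x‖ ∂μ
      = ∫ x : ({0}ᶜ : Set E), g x * h ‖(x : E)‖ ∂(μ.comap (↑)) := by
        rw [integral_subtype_comap (measurableSet_singleton _).compl fun x => g x * h ‖x‖,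
          restrict_compl_singleton]
    _ = ∫ p, g p.1 * ((p.2 : ℝ) ^ d * h p.2)
          ∂(μ.toSphere.prod (.volumeIoiPow (Module.finrank ℝ E - 1))) := by
        simp_rw [hpolar]
        exact μ.measurePreserving_homeomorphUnitSphereProd.integral_comp
          (Homeomorph.measurableEmbedding _) (fun p => g p.1 * ((p.2 : ℝ) ^ d * h p.2))
    _ = _ := by
        rw [integral_prod_mul (fun θ : Metric.sphere (0 : E) 1 => g θ)
          (fun r : Ioi (0 : ℝ) => (r : ℝ) ^ d * h r),
          integral_volumeIoiPow _ fun r => r ^ d * h r]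
        simp_rw [pow_add, mul_assoc]

section Euclidean

variable {ι : Type*} [Fintype ι]

theorem prod_pow_smul (β : ι → ℕ) (r : ℝ) (y : EuclideanSpace ℝ ι) :
    ∏ i, (r • y) i ^ β i = r ^ (∑ i, β i) * ∏ i, y i ^ β i := by
  simp only [PiLp.smul_apply, smul_eq_mul, mul_pow, Finset.prod_mul_distrib,
    Finset.prod_pow_eq_pow_sum]

theorem integral_prod_pow_mul_exp_neg_norm_sq (α : ι → ℕ) :
    ∫ y : EuclideanSpace ℝ ι, (∏ i, y i ^ (2 * α i)) * exp (-‖y‖ ^ 2) =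
      ∏ i, Gamma (α i + 1 / 2) := by
  have hsplit : ∀ x : ι → ℝ, (∏ i, (WithLp.toLp 2 x) i ^ (2 * α i)) *
      exp (-‖WithLp.toLp 2 x‖ ^ 2) = ∏ i, (x i ^ (2 * α i) * exp (-x i ^ 2)) := by
    intro x
    rw [EuclideanSpace.norm_eq, sq_sqrt (by positivity), Finset.prod_mul_distrib,
      ← Finset.sum_neg_distrib, exp_sum]
    simp [sq_abs]
  rw [← (PiLp.volume_preserving_toLp ι).integral_comp
    (MeasurableEquiv.toLp 2 (ι → ℝ)).measurableEmbedding]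
  simp_rw [hsplit]
  rw [integral_fintype_prod_volume_eq_prod (f := fun i t => t ^ (2 * α i) * exp (-t ^ 2))]
  exact Finset.prod_congr rfl fun i _ => integral_pow_mul_exp_neg_sq (α i)

theorem integral_sphere_prod_pow [Nonempty ι] (α : ι → ℕ) :
    ∫ θ : Metric.sphere (0 : EuclideanSpace ℝ ι) 1, ∏ i, (θ : EuclideanSpace ℝ ι) i ^ (2 * α i)
        ∂(volume : Measure (EuclideanSpace ℝ ι)).toSphere =
      2 * (∏ i, Gamma (α i + 1 / 2)) / Gamma (Fintype.card ι / 2 + ∑ i, α i) := by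
  have hpolar := integral_homogeneous_mul_fun_norm volume
    (g := fun y : EuclideanSpace ℝ ι => ∏ i, y i ^ (2 * α i)) (d := 2 * ∑ i, α i)
    (fun r _ y => by rw [prod_pow_smul, ← Finset.mul_sum, pow_mul]) fun r => exp (-r ^ 2)
  have hΓ : 0 < Gamma (Fintype.card ι / 2 + ∑ i, α i) := Gamma_pos_of_pos (by positivity)
  rw [integral_prod_pow_mul_exp_neg_norm_sq, integral_Ioi_pow_mul_exp_neg_sq,
    finrank_euclideanSpace, Nat.cast_add, Nat.cast_sub Fintype.card_pos] at hpolar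
  push_cast at hpolar ⊢
  rw [hpolar, show ((Fintype.card ι : ℝ) - 1 + 2 * ∑ i, (α i : ℝ) + 1) / 2 =
    Fintype.card ι / 2 + ∑ i, (α i : ℝ) by ring]
  field_simp

theorem integral_ball_prod_pow_div_norm_rpow [Nonempty ι] (α : ι → ℕ) {p : ℝ}
    (hp : p < Fintype.card ι + 2 * ∑ i, α i) :
    ∫ y in Metric.ball (0 : EuclideanSpace ℝ ι) 1, (∏ i, y i ^ (2 * α i)) / ‖y‖ ^ p =
      (∫ θ : Metric.sphere (0 : EuclideanSpace ℝ ι) 1,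
          ∏ i, (θ : EuclideanSpace ℝ ι) i ^ (2 * α i)
          ∂(volume : Measure (EuclideanSpace ℝ ι)).toSphere) /
        (Fintype.card ι + 2 * ∑ i, α i - p) := by
  have hball : ∀ y : EuclideanSpace ℝ ι,
      (Metric.ball 0 1).indicator (fun y => (∏ i, y i ^ (2 * α i)) / ‖y‖ ^ p) y =
        (∏ i, y i ^ (2 * α i)) * (Iio 1).indicator (fun r => r ^ (-p)) ‖y‖ := by
    intro y
    by_cases hy : ‖y‖ < 1
    · rw [indicator_of_mem (mem_ball_zero_iff.2 hy), indicator_of_mem (s := Iio 1) hy,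
        rpow_neg (norm_nonneg y), div_eq_mul_inv]
    · rw [indicator_of_notMem (mt mem_ball_zero_iff.1 hy), indicator_of_notMem (s := Iio 1) hy,
        mul_zero]
  rw [← integral_indicator measurableSet_ball, funext hball,
    integral_homogeneous_mul_fun_norm volume
      (fun r _ y => by rw [prod_pow_smul, ← Finset.mul_sum, pow_mul]),
    integral_Ioi_pow_mul_indicator_Iio_one_rpow, finrank_euclideanSpace, div_eq_mul_one_div]
  · congr 2
    push_cast [Nat.cast_sub Fintype.card_pos]
    ring
  · rw [finrank_euclideanSpace]
    push_cast [Nat.cast_sub Fintype.card_pos] at hp ⊢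
    linarith

theorem prod_Gamma_nat_add_half (α : ι → ℕ) :
    ∏ i, Gamma (α i + 1 / 2) =
      π ^ ((Fintype.card ι : ℝ) / 2) * ((∏ i, ((2 * α i).factorial : ℝ)) /
        ∏ i, ((α i).factorial : ℝ)) / 4 ^ ∑ i, α i := by
  simp only [Gamma_nat_add_half_eq_factorial, Finset.prod_div_distrib, Finset.prod_mul_distrib,
    Finset.prod_const, Finset.prod_pow_eq_pow_sum, Finset.card_univ]
  rw [sqrt_eq_rpow, ← rpow_natCast, ← rpow_mul pi_nonneg]
  field_simp

end Euclidean

/-- Value of `2(m-s) ∫_{B₁} y^{2α} / |y|^{N+2s} dy` for a multi-index with `|α| = m`. -/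
theorem stmt15 (N m : ℕ) (hN : 1 ≤ N) (s : ℝ) (hs : s ∈ Set.Ioo (0 : ℝ) m)
    (α : Fin N → ℕ) (hα : ∑ i, α i = m) :
    2 * ((m : ℝ) - s) *
        ∫ y in Metric.ball (0 : EuclideanSpace ℝ (Fin N)) 1,
          (∏ i, (y i) ^ (2 * α i)) / ‖y‖ ^ ((N : ℝ) + 2 * s) =
      ((∏ i, ((2 * α i).factorial : ℝ)) / ∏ i, ((α i).factorial : ℝ)) *
        Real.pi ^ ((N : ℝ) / 2) / (2 ^ (2 * m - 1) * Real.Gamma ((N : ℝ) / 2 + m)) := by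
  obtain ⟨hs0, hsm⟩ := hs
  have : Nonempty (Fin N) := ⟨⟨0, hN⟩⟩
  have hm : 0 < m := by exact_mod_cast hs0.trans hsm
  have h4 : (4 : ℝ) ^ m = 2 * 2 ^ (2 * m - 1) := by
    rw [← pow_succ', Nat.sub_add_cancel (by omega), pow_mul]
    norm_num
  rw [integral_ball_prod_pow_div_norm_rpow α (by rw [Fintype.card_fin, hα]; linarith),
    integral_sphere_prod_pow, prod_Gamma_nat_add_half, Fintype.card_fin, hα, h4]
  have hms : (m : ℝ) - s ≠ 0 := by linarith
  rw [show (N : ℝ) + 2 * m - (N + 2 * s) = 2 * (m - s) by ring]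
  field_simp

end
end
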